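/- (Thiele's differential equation, matrix form.) The matrix of partial reserves V(t) with entries v_{ij}(t) = E[1{Z(T)=j} ∫_t^T e^{−∫_t^u r(x)dx} dB(u) | Z(t)=i] satisfies ∂V(t)/∂t = r(t)V(t) − M(t)V(t) − R(t)P(t,T) with terminal condition V(T)=0, where R(t) is the matrix of expected instantaneous payment rates and P the transition matrix. -/

import Mathlib

/-!
Both propagators solve forward equations `∂ᵤ X s u = X s u * A u` with `X s s = 1`, so by
uniqueness of solutions of this linear ODE they satisfy `X s t * X t u = X s u`. Hence `X s u` is
invertible with inverse `X u s`, and differentiating the inverse gives the backward equation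
`∂ₛ X s u = -A s * X s u`. Writing `F t u = F t 0 * F 0 u` turns `V t` into
`F t 0 * ∫ u in t..T, F 0 u * R u * P u T`, whose derivative follows from the product rule and
the fundamental theorem of calculus.
-/

open Matrix MeasureTheory

attribute [local instance] Matrix.linftyOpNormedAddCommGroup Matrix.linftyOpNormedSpace
  Matrix.linftyOpNormedRing Matrix.linftyOpNormedAlgebra

open Set

variable {𝔸 : Type*} [NormedRing 𝔸]

theorem lipschitzWith_mul_const (a : 𝔸) : LipschitzWith ‖a‖₊ (· * a) :=
  LipschitzWith.of_dist_le_mul fun x y => by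
    simpa only [dist_eq_norm, ← sub_mul, coe_nnnorm, mul_comm ‖a‖] using norm_mul_le (x - y) a

variable [NormedAlgebra ℝ 𝔸]

theorem eq_of_hasDerivAt_mul_right {A : ℝ → 𝔸} (hA : Continuous A) {f g : ℝ → 𝔸}
    (hf : ∀ t, HasDerivAt f (f t * A t) t) (hg : ∀ t, HasDerivAt g (g t * A t) t)
    {t₀ : ℝ} (h₀ : f t₀ = g t₀) : f = g := by
  funext t
  obtain ⟨a, b, ht, ht₀⟩ : ∃ a b, t ∈ Ioo a b ∧ t₀ ∈ Ioo a b :=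
    ⟨min t t₀ - 1, max t t₀ + 1, by grind⟩
  obtain ⟨C, hC⟩ := isCompact_Icc.exists_bound_of_continuousOn (hA.continuousOn (s := Icc a b))
  have hLip : ∀ s ∈ Ioo a b, LipschitzOnWith C.toNNReal (· * A s) univ := fun s hs =>
    ((lipschitzWith_mul_const (A s)).weaken
      (by rw [← NNReal.coe_le_coe, coe_nnnorm]
          exact (hC s (Ioo_subset_Icc_self hs)).trans (Real.le_coe_toNNReal C))).lipschitzOnWith
  exact ODE_solution_unique_of_mem_Ioo hLip ht₀ (fun s _ => ⟨hf s, trivial⟩)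
    (fun s _ => ⟨hg s, trivial⟩) h₀ ht

theorem mul_eq_of_hasDerivAt_mul_right {A : ℝ → 𝔸} (hA : Continuous A) {X : ℝ → ℝ → 𝔸}
    (hX : ∀ s t, HasDerivAt (X s) (X s t * A t) t) (hX₀ : ∀ s, X s s = 1) (s t u : ℝ) :
    X s t * X t u = X s u := by
  refine congrFun (eq_of_hasDerivAt_mul_right hA (f := fun v => X s t * X t v) (fun v => ?_)
    (hX s) (t₀ := t) ?_) u
  · simpa only [mul_assoc] using (hX t v).const_mul (X s t)
  · rw [hX₀, mul_one]

theorem hasDerivAt_fst_of_hasDerivAt_mul_right [CompleteSpace 𝔸] {A : ℝ → 𝔸} (hA : Continuous A)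
    {X : ℝ → ℝ → 𝔸} (hX : ∀ s t, HasDerivAt (X s) (X s t * A t) t) (hX₀ : ∀ s, X s s = 1)
    (s u : ℝ) : HasDerivAt (fun s => X s u) (-(A s * X s u)) s := by
  have hmul := mul_eq_of_hasDerivAt_mul_right hA hX hX₀
  let U : ℝ → 𝔸ˣ := fun v => ⟨X u v, X v u, by rw [hmul, hX₀], by rw [hmul, hX₀]⟩
  have hinv : (fun v => X v u) = Ring.inverse ∘ X u :=
    funext fun v => (Ring.inverse_unit (U v)).symm
  rw [hinv]
  refine ((hasFDerivAt_ringInverse (U s)).comp_hasDerivAt s (hX u s)).congr_deriv ?_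
  change -(X s u * (X u s * A s) * X s u) = _
  rw [← mul_assoc, hmul, hX₀, one_mul]

theorem hasDerivAt_integral_mul_of_hasDerivAt_mul_right [CompleteSpace 𝔸] {A : ℝ → 𝔸}
    (hA : Continuous A) {F : ℝ → ℝ → 𝔸} (hF : ∀ s t, HasDerivAt (F s) (F s t * A t) t)
    (hF₀ : ∀ s, F s s = 1) {g : ℝ → 𝔸} (hg : Continuous g) (T t : ℝ) :
    HasDerivAt (fun t => ∫ u in t..T, F t u * g u)
      (-(A t * ∫ u in t..T, F t u * g u) - g t) t := by
  have hmul := mul_eq_of_hasDerivAt_mul_right hA hF hF₀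
  have hh : Continuous fun u => F 0 u * g u :=
    (continuous_iff_continuousAt.2 fun u => (hF 0 u).continuousAt).mul hg
  have hfactor : ∀ t, ∫ u in t..T, F t u * g u = F t 0 * ∫ u in t..T, F 0 u * g u := fun t => by
    have hu : ∀ u, F t u * g u = F t 0 * (F 0 u * g u) := fun u => by rw [← mul_assoc, hmul]
    simp_rw [hu]
    exact (ContinuousLinearMap.mul ℝ 𝔸 (F t 0)).intervalIntegral_comp_comm
      (hh.intervalIntegrable t T)
  have hW : HasDerivAt (fun t => ∫ u in t..T, F 0 u * g u) (-(F 0 t * g t)) t :=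
    intervalIntegral.integral_hasDerivAt_left (hh.intervalIntegrable t T)
      (hh.stronglyMeasurableAtFilter _ _) hh.continuousAt
  rw [funext hfactor, hfactor]
  refine ((hasDerivAt_fst_of_hasDerivAt_mul_right hA hF hF₀ t 0).mul hW).congr_deriv ?_
  rw [mul_neg, ← mul_assoc, hmul, hF₀, one_mul, neg_mul, mul_assoc, sub_eq_add_neg]

/-- **Thiele's differential equation, matrix form.** The partial reserve
matrix `V t = ∫_t^T ∏_t^u (I + (M - r•I) ds) * R u * ∏_u^T (I + M ds) du` satisfies
`∂V/∂t = r t • V t - M t * V t - R t * P (t,T)` with terminal condition `V T = 0`, where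
`P` is the transition (product integral of `M`) and `F` the product integral of `M - r•I`. -/
theorem thiele_matrix_ode {p : ℕ} (T : ℝ)
    (M R : ℝ → Matrix (Fin p) (Fin p) ℝ) (r : ℝ → ℝ)
    (hM : Continuous M) (hR : Continuous R) (hr : Continuous r)
    (P F : ℝ → ℝ → Matrix (Fin p) (Fin p) ℝ)
    (hP : ∀ s t : ℝ, HasDerivAt (fun u => P s u) (P s t * M t) t)
    (hP0 : ∀ s : ℝ, P s s = 1)
    (hF : ∀ s t : ℝ, HasDerivAt (fun u => F s u) (F s t * (M t - r t • 1)) t)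
    (hF0 : ∀ s : ℝ, F s s = 1)
    (V : ℝ → Matrix (Fin p) (Fin p) ℝ)
    (hV : ∀ t : ℝ, V t = ∫ u in t..T, F t u * R u * P u T) :
    (∀ t : ℝ, HasDerivAt V (r t • V t - M t * V t - R t * P t T) t) ∧ V T = 0 := by
  have hA : Continuous fun t => M t - r t • (1 : Matrix (Fin p) (Fin p) ℝ) :=
    hM.sub (hr.smul continuous_const)
  have hPT : Continuous fun u => P u T := continuous_iff_continuousAt.2 fun u =>
    (hasDerivAt_fst_of_hasDerivAt_mul_right hM hP hP0 u T).continuousAt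
  have hVeq : V = fun t => ∫ u in t..T, F t u * (R u * P u T) :=
    funext fun t => by simp_rw [hV, mul_assoc]
  refine ⟨fun t => ?_, by rw [hV, intervalIntegral.integral_same]⟩
  subst hVeq
  refine (hasDerivAt_integral_mul_of_hasDerivAt_mul_right hA hF hF0
    (g := fun u => R u * P u T) (hR.mul hPT) T t).congr_deriv ?_
  rw [sub_mul, smul_mul, one_mul]
  abel
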